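/- arXiv:1201.0591 — 3 statements merged into one kernel-verified Lean document; each statement's English description precedes it below -/
import Mathlib

section
/- A sequence of S-semimodules 0 → A →f B →g C → 0 is exact if and only if A ≅ Ker(g) via f (i.e., f is injective, uniform, with image Ker(g)) and C ≅ Coker(f) via g (i.e., g is surjective, uniform, with Ker(g) equal to the subtractive closure of f(A)). -/
open Function

/-- k-uniform map: equal images force a translation by kernel elements. -/
def KUniform {A B : Type*} [Add A] [Zero B] (f : A → B) : Prop :=
  ∀ a₁ a₂, f a₁ = f a₂ → ∃ k₁ k₂, f k₁ = 0 ∧ f k₂ = 0 ∧ a₁ + k₁ = a₂ + k₂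

/-- i-uniform map: the image is a subtractive subset. -/
def IUniform {A B : Type*} [Add B] (f : A → B) : Prop :=
  ∀ (b : B) (a₁ a₂ : A), b + f a₁ = f a₂ → ∃ a, f a = b

def UniformMap {A B : Type*} [Add A] [Zero B] [Add B] (f : A → B) : Prop :=
  KUniform f ∧ IUniform f

/-- The subtractive closure of a subset. -/
def subClosure {A : Type*} [Add A] (Y : Set A) : Set A :=
  {a | ∃ y₁ ∈ Y, ∃ y₂ ∈ Y, a + y₁ = y₂}

/-- Exactness of `A →f B →g C` at `B`. -/
def ExactAt {A B C : Type*} [Add B] [Zero B] [Zero C] (f : A → B) (g : B → C) : Prop :=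
  Set.range f = {b | g b = 0} ∧ KUniform g

/-- Exactness of `0 → A →f B →g C → 0` (exactness at `A`, `B` and `C`). -/
def ShortExactSeq {A B C : Type*} [AddCommMonoid A] [AddCommMonoid B] [AddCommMonoid C]
    (f : A → B) (g : B → C) : Prop :=
  ExactAt (fun _ : PUnit.{1} => (0 : A)) f ∧ ExactAt f g ∧
    ExactAt g (fun _ : C => (0 : PUnit.{1}))

/-- `0 → A →f B →g C → 0` is exact iff `A ≅ Ker(g)` via `f`
(`f` injective, uniform, with image `Ker(g)`) and `C ≅ Coker(f)` via `g`
(`g` surjective, uniform, with `Ker(g)` the subtractive closure of `f(A)`). -/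
theorem stmt3 (S : Type) [Semiring S] (A B C : Type)
    [AddCommMonoid A] [Module S A] [AddCommMonoid B] [Module S B]
    [AddCommMonoid C] [Module S C] (f : A →ₗ[S] B) (g : B →ₗ[S] C) :
    ShortExactSeq ⇑f ⇑g ↔
      ((Injective f ∧ UniformMap ⇑f ∧ Set.range ⇑f = {b : B | g b = 0}) ∧
       (Surjective g ∧ UniformMap ⇑g ∧ {b : B | g b = 0} = subClosure (Set.range ⇑f))) := by
  constructor
  · rintro ⟨⟨hA, hfk⟩, ⟨hrange, hgk⟩, ⟨hC, _⟩⟩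
    have hker : ∀ a : A, f a = 0 → a = 0 := by
      intro a ha
      have h : a ∈ Set.range (fun _ : PUnit.{1} => (0 : A)) := by rw [hA]; exact ha
      obtain ⟨_, h⟩ := h; exact h.symm
    have hinj : Injective f := by
      intro a₁ a₂ h
      obtain ⟨k₁, k₂, h1, h2, h3⟩ := hfk a₁ a₂ h
      rwa [hker k₁ h1, hker k₂ h2, add_zero, add_zero] at h3
    have hsurj : Surjective g := by
      intro c
      have h : c ∈ Set.range ⇑g := by rw [hC]; rfl
      exact h
    have hzero : ∀ b ∈ Set.range ⇑f, g b = 0 := by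
      intro b hb; rw [hrange] at hb; exact hb
    have hgb0 : ∀ (b : B) (a₁ a₂ : A), b + f a₁ = f a₂ → g b = 0 := by
      intro b a₁ a₂ hb
      have := congrArg g hb
      rw [map_add, hzero _ ⟨a₁, rfl⟩, hzero _ ⟨a₂, rfl⟩, add_zero] at this
      exact this
    refine ⟨⟨hinj, ⟨hfk, ?_⟩, hrange⟩, hsurj, ⟨hgk, fun b _ _ _ => hsurj b⟩, ?_⟩
    · intro b a₁ a₂ hb
      have hb0 : b ∈ Set.range ⇑f := by rw [hrange]; exact hgb0 b a₁ a₂ hb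
      obtain ⟨a, ha⟩ := hb0
      exact ⟨a, ha⟩
    · ext b
      constructor
      · intro hb
        have hb' : b ∈ Set.range ⇑f := by rw [hrange]; exact hb
        exact ⟨0, ⟨0, map_zero f⟩, b, hb', add_zero b⟩
      · rintro ⟨y₁, ⟨a₁, rfl⟩, y₂, ⟨a₂, rfl⟩, h⟩
        exact hgb0 b a₁ a₂ h
  · rintro ⟨⟨hinj, ⟨hfk, hfi⟩, hrange⟩, hsurj, ⟨hgk, _⟩, hker⟩
    refine ⟨⟨?_, hfk⟩, ⟨hrange, hgk⟩, ⟨?_, ?_⟩⟩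
    · ext a
      constructor
      · rintro ⟨_, rfl⟩; exact map_zero f
      · intro ha
        have : f a = f 0 := by rw [map_zero]; exact ha
        exact ⟨PUnit.unit, (hinj this).symm⟩
    · ext c
      simpa using hsurj c
    · intro c₁ c₂ _
      exact ⟨c₂, c₁, rfl, rfl, add_comm c₁ c₂⟩
end

section
/- Let {f_λ : L_λ → M_λ} be a family of morphisms of left S-semimodules. The direct sum map f : ⊕_λ L_λ → ⊕_λ M_λ is k-uniform (respectively i-uniform, uniform) if and only if every f_λ is k-uniform (respectively i-uniform, uniform). -/
open Function

/-!
Both conditions are coordinatewise. Testing the direct sum on elements supported at a single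
index gives the conditions for each `f λ`. Conversely, the witnesses can be chosen one
coordinate at a time. Outside the (finite) support of the data, zero is a valid witness, so the
chosen witnesses are again finitely supported.
-/

theorem DFinsupp.exists_forall_of_forall_mem_exists {ι : Type*} {β : ι → Type*}
    [∀ i, Zero (β i)] (s : Finset ι) (P : ∀ i, β i → Prop) (h₀ : ∀ i ∉ s, P i 0)
    (h : ∀ i ∈ s, ∃ b, P i b) : ∃ g : Π₀ i, β i, ∀ i, P i (g i) := by
  classical
  choose b hb using h
  refine ⟨DFinsupp.mk s fun i => b i i.2, fun i => ?_⟩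
  by_cases hi : i ∈ s
  · simpa [DFinsupp.mk_apply, hi] using hb i hi
  · simpa [DFinsupp.mk_apply, hi] using h₀ i hi

section mapRange

variable {ι : Type*} {L M : ι → Type*} [∀ i, AddZeroClass (L i)] [∀ i, AddZeroClass (M i)]
  (f : ∀ i, L i → M i) (hf : ∀ i, f i 0 = 0)

theorem kUniform_dfinsuppMapRange_iff :
    KUniform (DFinsupp.mapRange f hf) ↔ ∀ i, KUniform (f i) := by
  classical
  constructor
  · intro h i a₁ a₂ ha
    obtain ⟨k₁, k₂, hk₁, hk₂, hk⟩ := h (DFinsupp.single i a₁) (DFinsupp.single i a₂) (by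
      simp only [DFinsupp.mapRange_single, ha])
    refine ⟨k₁ i, k₂ i, ?_, ?_, by simpa using DFunLike.congr_fun hk i⟩
    · simpa using DFunLike.congr_fun hk₁ i
    · simpa using DFunLike.congr_fun hk₂ i
  · intro h x₁ x₂ hx
    have hxi (i : ι) : f i (x₁ i) = f i (x₂ i) := by
      simpa using DFunLike.congr_fun hx i
    -- the two kernel witnesses are chosen jointly, as one family of pairs
    obtain ⟨k, hk⟩ := DFinsupp.exists_forall_of_forall_mem_exists (β := fun i => L i × L i)
      (x₁.support ∪ x₂.support)
      (fun i k => f i k.1 = 0 ∧ f i k.2 = 0 ∧ x₁ i + k.1 = x₂ i + k.2)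
      (fun i hi => by
        simp only [Finset.mem_union, DFinsupp.mem_support_iff, not_or, not_not] at hi
        simp [hf, hi.1, hi.2])
      (fun i _ => by
        obtain ⟨k₁, k₂, hk⟩ := h i _ _ (hxi i)
        exact ⟨(k₁, k₂), hk⟩)
    refine ⟨k.mapRange (fun _ => Prod.fst) fun _ => rfl, k.mapRange (fun _ => Prod.snd)
      fun _ => rfl, ?_, ?_, ?_⟩ <;> ext i
    · simpa using (hk i).1
    · simpa using (hk i).2.1
    · simpa using (hk i).2.2

theorem iUniform_dfinsuppMapRange_iff :
    IUniform (DFinsupp.mapRange f hf) ↔ ∀ i, IUniform (f i) := by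
  classical
  constructor
  · intro h i b a₁ a₂ hb
    obtain ⟨a, ha⟩ := h (DFinsupp.single i b) (DFinsupp.single i a₁) (DFinsupp.single i a₂) (by
      rw [DFinsupp.mapRange_single, DFinsupp.mapRange_single, ← DFinsupp.single_add, hb])
    exact ⟨a i, by simpa using DFunLike.congr_fun ha i⟩
  · intro h y x₁ x₂ hy
    obtain ⟨a, ha⟩ := DFinsupp.exists_forall_of_forall_mem_exists y.support
      (fun i a => f i a = y i)
      (fun i hi => by rw [DFinsupp.notMem_support_iff.mp hi, hf])
      (fun i _ => h i (y i) (x₁ i) (x₂ i) (by simpa using DFunLike.congr_fun hy i))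
    exact ⟨a, DFinsupp.ext fun i => by simpa using ha i⟩

theorem uniformMap_dfinsuppMapRange_iff :
    UniformMap (DFinsupp.mapRange f hf) ↔ ∀ i, UniformMap (f i) := by
  simp only [UniformMap, forall_and, kUniform_dfinsuppMapRange_iff, iUniform_dfinsuppMapRange_iff]

end mapRange

/-- The direct sum `⊕ f_λ : ⊕ L_λ → ⊕ M_λ` of a family of morphisms
of left `S`-semimodules is k-uniform (resp. i-uniform, uniform) iff every `f_λ` is
k-uniform (resp. i-uniform, uniform). -/
theorem stmt11 (S : Type) [Semiring S] (Λ : Type) (L M : Λ → Type)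
    [∀ l, AddCommMonoid (L l)] [∀ l, Module S (L l)]
    [∀ l, AddCommMonoid (M l)] [∀ l, Module S (M l)] (f : ∀ l, L l →ₗ[S] M l) :
    (KUniform ⇑(DFinsupp.mapRange.linearMap f) ↔ ∀ l, KUniform ⇑(f l)) ∧
    (IUniform ⇑(DFinsupp.mapRange.linearMap f) ↔ ∀ l, IUniform ⇑(f l)) ∧
    (UniformMap ⇑(DFinsupp.mapRange.linearMap f) ↔ ∀ l, UniformMap ⇑(f l)) :=
  ⟨kUniform_dfinsuppMapRange_iff (fun l => f l) fun l => map_zero (f l),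
    iUniform_dfinsuppMapRange_iff (fun l => f l) fun l => map_zero (f l),
    uniformMap_dfinsuppMapRange_iff (fun l => f l) fun l => map_zero (f l)⟩
end

section
/- If a left S-semimodule X is uniformly finitely presented, then there exist m, n ∈ ℕ and an exact sequence of left S-semimodules S^m → S^n → X → 0. -/
open Function

variable (S : Type) [Semiring S]

/-- `X` is uniformly finitely generated: there is a uniform surjective `S`-linear map
`Sⁿ → X`. -/
def UFinGen (X : Type) [AddCommMonoid X] [Module S X] : Prop :=
  ∃ (n : ℕ) (g : (Fin n → S) →ₗ[S] X), Surjective g ∧ UniformMap ⇑g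

/-- `X` is uniformly finitely presented: uniformly finitely generated, and for every
exact sequence `0 → K → Sⁿ → X → 0` the semimodule `K` is finitely generated. -/
def UFinPres (X : Type) [AddCommMonoid X] [Module S X] : Prop :=
  UFinGen S X ∧
  ∀ (n : ℕ) (K : Type) [AddCommMonoid K] [Module S K]
    (f : K →ₗ[S] (Fin n → S)) (g : (Fin n → S) →ₗ[S] X),
      ShortExactSeq ⇑f ⇑g → Module.Finite S K

/-- A uniformly finitely presented left `S`-semimodule `X` admits an
exact sequence `Sᵐ → Sⁿ → X → 0`. -/
theorem stmt14 (X : Type) [AddCommMonoid X] [Module S X] (h : UFinPres S X) :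
    ∃ (m n : ℕ) (f : (Fin m → S) →ₗ[S] (Fin n → S)) (g : (Fin n → S) →ₗ[S] X),
      ExactAt ⇑f ⇑g ∧ ExactAt ⇑g (fun _ : X => (0 : PUnit.{1})) := by
  obtain ⟨⟨n, g, hsurj, hk, _⟩, hpres⟩ := h
  set K := LinearMap.ker g with hK
  have hexg0 : ExactAt ⇑g (fun _ : X => (0 : PUnit.{1})) := by
    constructor
    · ext x
      simp [hsurj.range_eq]
    · intro a₁ a₂ _
      exact ⟨a₂, a₁, rfl, rfl, add_comm _ _⟩
  have hexKg : ExactAt ⇑(K.subtype) ⇑g := by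
    constructor
    · ext v
      constructor
      · rintro ⟨⟨k, hk'⟩, rfl⟩; exact hk'
      · intro hv; exact ⟨⟨v, hv⟩, rfl⟩
    · exact hk
  have hfin : Module.Finite S K := by
    apply hpres n K K.subtype g
    refine ⟨?_, hexKg, hexg0⟩
    constructor
    · ext k
      constructor
      · rintro ⟨_, rfl⟩; simp
      · intro hk'
        have : (k : Fin n → S) = 0 := hk'
        exact ⟨PUnit.unit, (Subtype.ext this.symm : (0 : K) = k)⟩
    · intro a₁ a₂ hval
      refine ⟨0, 0, map_zero _, map_zero _, ?_⟩
      have : (a₁ : Fin n → S) = a₂ := hval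
      simp [Subtype.ext this]
  obtain ⟨m, p, hp⟩ := Module.Finite.exists_fin' S K
  refine ⟨m, n, K.subtype.comp p, g, ?_, hexg0⟩
  constructor
  · rw [LinearMap.coe_comp, Set.range_comp, hp.range_eq, Set.image_univ]
    exact hexKg.1
  · exact hk
end
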